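/- arXiv:2304.08021 — 4 statements merged into one kernel-verified Lean document; each statement's English description precedes it below -/
import Mathlib

section
/- If T is an invertible hyponormal operator on a complex Hilbert space, then T⁻¹ is also hyponormal. -/
open ContinuousLinearMap

/-- An operator `T` on a complex Hilbert space is *hyponormal* if its self-commutator
`T*T - TT*` is a non-negative operator. -/
def Hyponormal {H : Type*} [NormedAddCommGroup H] [InnerProductSpace ℂ H]
    [CompleteSpace H] (T : H →L[ℂ] H) : Prop :=
  (adjoint T * T - T * adjoint T).IsPositive

/-
Hyponormality of `T` says `‖T* x‖ ≤ ‖T x‖` for all `x`. Writing `S = T⁻¹`, this makes `T* S` a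
contraction, hence so is its adjoint `S* T`, and then `‖S* y‖ = ‖S* T (S y)‖ ≤ ‖S y‖`.
-/

namespace ContinuousLinearMap

variable {𝕜 E : Type*} [RCLike 𝕜] [NormedAddCommGroup E] [InnerProductSpace 𝕜 E]
  [CompleteSpace E]

theorem re_inner_adjoint_mul_self_sub_self_mul_adjoint_apply (A : E →L[𝕜] E) (x : E) :
    RCLike.re (inner 𝕜 ((adjoint A * A - A * adjoint A) x) x) = ‖A x‖ ^ 2 - ‖adjoint A x‖ ^ 2 := by
  have hA := apply_norm_sq_eq_inner_adjoint_left A x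
  have hA' := apply_norm_sq_eq_inner_adjoint_left (adjoint A) x
  rw [adjoint_adjoint] at hA'
  rw [hA, hA', sub_apply, inner_sub_left, map_sub]
  rfl

theorem isPositive_adjoint_mul_self_sub_self_mul_adjoint_iff (A : E →L[𝕜] E) :
    (adjoint A * A - A * adjoint A).IsPositive ↔ ∀ x, ‖adjoint A x‖ ≤ ‖A x‖ := by
  have hsa : IsSelfAdjoint (adjoint A * A - A * adjoint A) := by
    simpa only [← star_eq_adjoint] using
      (IsSelfAdjoint.star_mul_self A).sub (IsSelfAdjoint.mul_star_self A)
  simp only [isPositive_def', hsa, true_and, reApplyInnerSelf_apply,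
    re_inner_adjoint_mul_self_sub_self_mul_adjoint_apply, sub_nonneg,
    sq_le_sq₀ (norm_nonneg _) (norm_nonneg _)]

theorem norm_adjoint_apply_le_of_mul_eq_one {A S : E →L[𝕜] E}
    (hA : ∀ x, ‖adjoint A x‖ ≤ ‖A x‖) (hAS : A * S = 1) (y : E) :
    ‖adjoint S y‖ ≤ ‖S y‖ := by
  have hright_inv : ∀ x, A (S x) = x := fun x => by
    simpa using DFunLike.congr_fun hAS x
  have hcontr : ‖adjoint A ∘L S‖ ≤ 1 :=
    opNorm_le_bound _ zero_le_one fun x => by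
      simpa only [comp_apply, hright_inv, one_mul] using hA (S x)
  have hcontr_adj : ‖adjoint S ∘L A‖ ≤ 1 := by
    rwa [← adjoint_adjoint A, ← adjoint_comp, LinearIsometryEquiv.norm_map]
  calc ‖adjoint S y‖ = ‖(adjoint S ∘L A) (S y)‖ := by rw [comp_apply, hright_inv]
    _ ≤ ‖adjoint S ∘L A‖ * ‖S y‖ := le_opNorm _ _
    _ ≤ ‖S y‖ := mul_le_of_le_one_left (norm_nonneg _) hcontr_adj

end ContinuousLinearMap

theorem hyponormal_iff_norm_adjoint_apply_le {H : Type*} [NormedAddCommGroup H]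
    [InnerProductSpace ℂ H] [CompleteSpace H] (T : H →L[ℂ] H) :
    Hyponormal T ↔ ∀ x, ‖adjoint T x‖ ≤ ‖T x‖ :=
  isPositive_adjoint_mul_self_sub_self_mul_adjoint_iff T

theorem inverse_of_hyponormal {H : Type*} [NormedAddCommGroup H] [InnerProductSpace ℂ H]
    [CompleteSpace H] (T : (H →L[ℂ] H)ˣ) (hT : Hyponormal (T : H →L[ℂ] H)) :
    Hyponormal ((T⁻¹ : (H →L[ℂ] H)ˣ) : H →L[ℂ] H) := by
  rw [hyponormal_iff_norm_adjoint_apply_le] at hT ⊢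
  exact norm_adjoint_apply_le_of_mul_eq_one hT T.mul_inv
end

section
/- Let T be an invertible bounded operator on a complex Hilbert space whose self-commutator satisfies T*T - TT* = x ⊗ x for some vector x (the rank-one operator h ↦ ⟨h, x⟩x). Then (T*)⁻¹T⁻¹ = (T*T - x⊗x)⁻¹ and T⁻¹(T*)⁻¹ = (TT* + x⊗x)⁻¹, and the self-commutator of T⁻¹ equals (TT*)⁻¹ (x ⊗ x) (T*T)⁻¹; in particular it has rank at most one. -/
open ContinuousLinearMap

/-- The rank-one operator `x ⊗ y : h ↦ ⟨h, y⟩ x` (inner product linear in the first slot). -/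
noncomputable def rankOne {H : Type*} [NormedAddCommGroup H] [InnerProductSpace ℂ H]
    (x y : H) : H →L[ℂ] H :=
  (innerSL ℂ y).smulRight x

/-!
Since `T` is a unit, `(T*)⁻¹ T⁻¹ = (T T*)⁻¹` and `T⁻¹ (T*)⁻¹ = (T* T)⁻¹`, and the hypothesis
rewrites `T T*` as `T* T - x ⊗ x` and `T* T` as `T T* + x ⊗ x`. The identity
`a⁻¹ - b⁻¹ = a⁻¹ (b - a) b⁻¹` turns the self-commutator of `T⁻¹` into `(T T*)⁻¹ (x ⊗ x) (T* T)⁻¹`,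
whose range lies in the span of `(T T*)⁻¹ x`.
-/

theorem Units.star_inv_mul_inv {R : Type*} [MonoidWithZero R] [StarMul R] (u : Rˣ) :
    star (↑u⁻¹ : R) * ↑u⁻¹ = Ring.inverse (↑u * star (u : R)) := by
  rw [← Units.coe_star u, ← Units.val_mul u, Ring.inverse_unit, mul_inv_rev, Units.val_mul,
    Units.coe_star_inv]

theorem Units.inv_mul_star_inv {R : Type*} [MonoidWithZero R] [StarMul R] (u : Rˣ) :
    (↑u⁻¹ : R) * star ↑u⁻¹ = Ring.inverse (star (u : R) * u) := by
  rw [← Units.coe_star u, ← Units.val_mul (star u), Ring.inverse_unit, mul_inv_rev, Units.val_mul,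
    Units.coe_star_inv]

section RankOne

variable {H : Type*} [NormedAddCommGroup H] [InnerProductSpace ℂ H]

theorem range_rankOne_le (x y : H) :
    LinearMap.range (rankOne x y : H →ₗ[ℂ] H) ≤ Submodule.span ℂ {x} := by
  rintro _ ⟨z, rfl⟩
  exact Submodule.mem_span_singleton.mpr ⟨inner ℂ y z, rfl⟩

theorem rank_rankOne_le_one (x y : H) : LinearMap.rank (rankOne x y : H →ₗ[ℂ] H) ≤ 1 :=
  (Submodule.rank_mono (range_rankOne_le x y)).trans (by simpa using rank_span_le (R := ℂ) {x})

theorem rank_mul_rankOne_mul_le_one (A C : H →L[ℂ] H) (x y : H) :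
    LinearMap.rank ((A * rankOne x y * C : H →L[ℂ] H) : H →ₗ[ℂ] H) ≤ 1 := by
  rw [toLinearMap_mul, toLinearMap_mul]
  exact ((LinearMap.rank_comp_le_left _ _).trans (LinearMap.rank_comp_le_right _ _)).trans
    (rank_rankOne_le_one x y)

end RankOne

theorem inverse_self_commutator_formula {H : Type*} [NormedAddCommGroup H]
    [InnerProductSpace ℂ H] [CompleteSpace H] (T : (H →L[ℂ] H)ˣ) (x : H)
    (h : adjoint (T : H →L[ℂ] H) * (T : H →L[ℂ] H)
        - (T : H →L[ℂ] H) * adjoint (T : H →L[ℂ] H) = rankOne x x) :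
    adjoint ((T⁻¹ : (H →L[ℂ] H)ˣ) : H →L[ℂ] H) * ((T⁻¹ : (H →L[ℂ] H)ˣ) : H →L[ℂ] H)
        = Ring.inverse (adjoint (T : H →L[ℂ] H) * (T : H →L[ℂ] H) - rankOne x x)
      ∧ ((T⁻¹ : (H →L[ℂ] H)ˣ) : H →L[ℂ] H) * adjoint ((T⁻¹ : (H →L[ℂ] H)ˣ) : H →L[ℂ] H)
        = Ring.inverse ((T : H →L[ℂ] H) * adjoint (T : H →L[ℂ] H) + rankOne x x)
      ∧ adjoint ((T⁻¹ : (H →L[ℂ] H)ˣ) : H →L[ℂ] H) * ((T⁻¹ : (H →L[ℂ] H)ˣ) : H →L[ℂ] H)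
          - ((T⁻¹ : (H →L[ℂ] H)ˣ) : H →L[ℂ] H) * adjoint ((T⁻¹ : (H →L[ℂ] H)ˣ) : H →L[ℂ] H)
        = Ring.inverse ((T : H →L[ℂ] H) * adjoint (T : H →L[ℂ] H)) * rankOne x x
            * Ring.inverse (adjoint (T : H →L[ℂ] H) * (T : H →L[ℂ] H))
      ∧ LinearMap.rank
          ((adjoint ((T⁻¹ : (H →L[ℂ] H)ˣ) : H →L[ℂ] H) * ((T⁻¹ : (H →L[ℂ] H)ˣ) : H →L[ℂ] H)
            - ((T⁻¹ : (H →L[ℂ] H)ˣ) : H →L[ℂ] H)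
              * adjoint ((T⁻¹ : (H →L[ℂ] H)ˣ) : H →L[ℂ] H) : H →L[ℂ] H) : H →ₗ[ℂ] H) ≤ 1 := by
  set S : H →L[ℂ] H := ↑T
  have hTT : S * adjoint S = adjoint S * S - rankOne x x := by rw [← h, sub_sub_cancel]
  have hTT' : adjoint S * S = S * adjoint S + rankOne x x := by rw [← h, add_sub_cancel]
  have e₁ : adjoint (↑T⁻¹ : H →L[ℂ] H) * ↑T⁻¹ = Ring.inverse (S * adjoint S) := by
    simpa only [← star_eq_adjoint] using T.star_inv_mul_inv
  have e₂ : (↑T⁻¹ : H →L[ℂ] H) * adjoint ↑T⁻¹ = Ring.inverse (adjoint S * S) := by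
    simpa only [← star_eq_adjoint] using T.inv_mul_star_inv
  have isUnit_iff : IsUnit (S * adjoint S) ↔ IsUnit (adjoint S * S) := by
    simp only [← star_eq_adjoint]
    exact iff_of_true (T.isUnit.mul T.isUnit.star) (T.isUnit.star.mul T.isUnit)
  have commutator : adjoint (↑T⁻¹ : H →L[ℂ] H) * ↑T⁻¹ - ↑T⁻¹ * adjoint (↑T⁻¹ : H →L[ℂ] H)
      = Ring.inverse (S * adjoint S) * rankOne x x * Ring.inverse (adjoint S * S) := by
    rw [e₁, e₂, Ring.inverse_sub_inverse isUnit_iff, h]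
  refine ⟨by rw [e₁, hTT], by rw [e₂, hTT'], commutator, ?_⟩
  rw [commutator]
  exact rank_mul_rankOne_mul_le_one _ _ x x
end

section
/- Let T be an invertible hyponormal operator with rank-one self-commutator [T*,T] = x ⊗ x. Then the self-commutator of T⁻¹ has rank exactly one provided x ≠ 0. -/
/-!
Writing `S = T⁻¹`, one has `S*S - SS* = (S*S)(T*T - TT*)(SS*)`, so the self-commutator of `S`
is `(S*S) (x ⊗ x) (SS*) = (S*S x) ⊗ (SS* x)`, using that `SS*` is self-adjoint. Both vectors are
nonzero because `S*S` and `SS*` are invertible, and a rank-one operator `u ⊗ v` with `u, v ≠ 0`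
has rank one.
-/

open ContinuousLinearMap

theorem Units.star_inv_mul_inv_sub_inv_mul_star_inv {R : Type*} [Ring R] [StarRing R]
    (u : Rˣ) :
    star (↑u⁻¹ : R) * ↑u⁻¹ - ↑u⁻¹ * star (↑u⁻¹ : R) =
      (star (↑u⁻¹ : R) * ↑u⁻¹) * (star (u : R) * u - u * star (u : R)) *
        (↑u⁻¹ * star (↑u⁻¹ : R)) := by
  have h₁ : star (u : R) * star (↑u⁻¹ : R) = 1 := by rw [← star_mul, u.inv_mul, star_one]
  have h₂ : star (↑u⁻¹ : R) * star (u : R) = 1 := by rw [← star_mul, u.mul_inv, star_one]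
  have hstar : (star (↑u⁻¹ : R) * ↑u⁻¹) * (star (u : R) * u) * (↑u⁻¹ * star (↑u⁻¹ : R)) =
      star (↑u⁻¹ : R) * ↑u⁻¹ := by
    simp only [mul_assoc, u.mul_inv_cancel_left, h₁, mul_one]
  have hmul : (star (↑u⁻¹ : R) * ↑u⁻¹) * (u * star (u : R)) * (↑u⁻¹ * star (↑u⁻¹ : R)) =
      ↑u⁻¹ * star (↑u⁻¹ : R) := by
    simp only [mul_assoc, u.inv_mul_cancel_left]
    rw [← mul_assoc, h₂, one_mul]
  rw [mul_sub, sub_mul, hstar, hmul]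

theorem ContinuousLinearMap.units_apply_ne_zero {R M : Type*} [Semiring R] [TopologicalSpace M]
    [AddCommMonoid M] [Module R M] (u : (M →L[R] M)ˣ) {x : M} (hx : x ≠ 0) :
    (u : M →L[R] M) x ≠ 0 :=
  (ContinuousLinearEquiv.unitsEquiv R M u).map_ne_zero_iff.mpr hx

theorem rank_self_commutator_inverse_eq_one {H : Type*} [NormedAddCommGroup H]
    [InnerProductSpace ℂ H] [CompleteSpace H] (T : (H →L[ℂ] H)ˣ) (x : H) (hx : x ≠ 0)
    (h : adjoint (T : H →L[ℂ] H) * (T : H →L[ℂ] H)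
        - (T : H →L[ℂ] H) * adjoint (T : H →L[ℂ] H) = rankOne x x) :
    LinearMap.rank
        ((adjoint ((T⁻¹ : (H →L[ℂ] H)ˣ) : H →L[ℂ] H) * ((T⁻¹ : (H →L[ℂ] H)ˣ) : H →L[ℂ] H)
          - ((T⁻¹ : (H →L[ℂ] H)ˣ) : H →L[ℂ] H)
            * adjoint ((T⁻¹ : (H →L[ℂ] H)ˣ) : H →L[ℂ] H) : H →L[ℂ] H) : H →ₗ[ℂ] H) = 1 := by
  simp only [← star_eq_adjoint] at h ⊢
  rw [T.star_inv_mul_inv_sub_inv_mul_star_inv, h, rankOne, ← InnerProductSpace.rankOne_def,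
    mul_def, mul_def, InnerProductSpace.comp_rankOne, InnerProductSpace.rankOne_comp,
    (IsSelfAdjoint.mul_star_self _).adjoint_eq]
  exact InnerProductSpace.rank_rankOne (units_apply_ne_zero (star T⁻¹ * T⁻¹) hx)
    (units_apply_ne_zero (T⁻¹ * star T⁻¹) hx)
end

section
/- Let φ(z) = β(z - a)/(1 - āz) with |β| = 1 and |a| < 1, a ≠ 0, and let T be a bounded operator with σ(T) ⊆ closed unit disc. Writing φ(z) = -β/ā + c/(z - 1/ā)·β for some constant, one has the identity: [φ(T)*, φ(T)] = |c|² ((T - ā⁻¹)(T* - a⁻¹))⁻¹ [T*, T] ((T* - a⁻¹)(T - ā⁻¹))⁻¹ where c = (a - ā⁻¹)/ā (up to the unimodular factor β which does not affect the self-commutator). In particular, if [T*,T] ≥ 0 then [φ(T)*, φ(T)] ≥ 0, and if [T*,T] has rank one then so does [φ(T)*, φ(T)]. -/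
/-!
Put `A = T - ā⁻¹`, invertible because `ā⁻¹` lies outside the closed unit disc. Then
`φ(T) = -β/ā + βc A⁻¹` is affine in `A⁻¹`. Self-commutators ignore translations and get scaled
by `|q|²` under `x ↦ p + q x`, so `[φ(T)*, φ(T)] = |c|² [A⁻¹*, A⁻¹]`. Expanding
`[A⁻¹*, A⁻¹] = A*⁻¹A⁻¹ - A⁻¹A*⁻¹` gives `(AA*)⁻¹ [A*, A] (A*A)⁻¹`, and `[A*, A] = [T*, T]`.
Rank one survives because the outer factors are invertible. The sandwich is not a congruence,
so positivity needs a separate argument: `AA* ≤ A*A` gives `(A*A)⁻¹ ≤ (AA*)⁻¹`, because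
inversion is antitone on positive invertible elements of a C⋆-algebra.
-/

open ContinuousLinearMap

open scoped Ring ComplexOrder

section StarAlgebra

variable {𝕜 A : Type*} [CommRing 𝕜] [StarRing 𝕜] [Ring A] [StarRing A] [Algebra 𝕜 A]
  [StarModule 𝕜 A]

theorem star_mul_sub_mul_star_smul_one_add_smul (p q : 𝕜) (x : A) :
    star (p • 1 + q • x) * (p • 1 + q • x) - (p • 1 + q • x) * star (p • 1 + q • x)
      = (star q * q) • (star x * x - x * star x) := by
  simp only [star_add, star_smul, star_one, add_mul, mul_add, smul_mul_assoc, mul_smul_comm,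
    mul_one, one_mul]
  module

theorem star_mul_sub_mul_star_sub_smul_one (μ : 𝕜) (x : A) :
    star (x - μ • 1) * (x - μ • 1) - (x - μ • 1) * star (x - μ • 1)
      = star x * x - x * star x := by
  have hx : x - μ • 1 = (-μ) • 1 + (1 : 𝕜) • x := by module
  rw [hx, star_mul_sub_mul_star_smul_one_add_smul, star_one, one_mul, one_smul]

end StarAlgebra

theorem star_mul_sub_mul_star_ringInverse {A : Type*} [Ring A] [StarRing A] {x : A}
    (hx : IsUnit x) :
    star x⁻¹ʳ * x⁻¹ʳ - x⁻¹ʳ * star x⁻¹ʳ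
      = (x * star x)⁻¹ʳ * (star x * x - x * star x) * (star x * x)⁻¹ʳ := by
  obtain ⟨u, rfl⟩ := hx
  obtain ⟨v, hv⟩ : ∃ v : Aˣ, star u = v := ⟨_, rfl⟩
  rw [Ring.inverse_unit, ← Units.coe_star_inv, ← Units.coe_star, hv, ← Units.val_mul u v,
    ← Units.val_mul v u, Ring.inverse_unit, Ring.inverse_unit]
  simp [mul_sub, sub_mul, mul_assoc]

theorem Ring.inverse_smul {𝕜 A : Type*} [Field 𝕜] [Ring A] [Algebra 𝕜 A] {c : 𝕜} (hc : c ≠ 0)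
    {x : A} (hx : IsUnit x) : (c • x)⁻¹ʳ = c⁻¹ • x⁻¹ʳ := by
  obtain ⟨u, rfl⟩ := hx
  rw [Ring.inverse_unit]
  exact Ring.inverse_unit ⟨c • (u : A), c⁻¹ • ↑u⁻¹, by simp [hc], by simp [hc]⟩

theorem isUnit_sub_smul_one_of_spectrum_subset {𝕜 A : Type*} [NormedField 𝕜] [Ring A]
    [Algebra 𝕜 A] {x : A} (hx : spectrum 𝕜 x ⊆ Metric.closedBall 0 1) {μ : 𝕜} (hμ : 1 < ‖μ‖) :
    IsUnit (x - μ • 1) := by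
  have hμx : μ ∉ spectrum 𝕜 x := fun h => by
    simpa using (mem_closedBall_zero_iff.mp (hx h)).trans_lt hμ
  simpa [Algebra.algebraMap_eq_smul_one] using (spectrum.notMem_iff.mp hμx).neg

theorem smul_sub_smul_one_mul_ringInverse_one_sub_smul {𝕜 A : Type*} [Field 𝕜] [Ring A]
    [Algebra 𝕜 A] {s : 𝕜} (hs : s ≠ 0) {x : A} (hx : IsUnit (x - s⁻¹ • 1)) (a β : 𝕜) :
    β • ((x - a • 1) * (1 - s • x)⁻¹ʳ)
      = (-β / s) • 1 + (β * ((a - s⁻¹) / s)) • (x - s⁻¹ • 1)⁻¹ʳ := by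
  have h1 : (1 : A) - s • x = (-s) • (x - s⁻¹ • 1) := by
    rw [smul_sub, smul_smul, neg_mul, mul_inv_cancel₀ hs]; module
  have h2 : x - a • 1 = (x - s⁻¹ • 1) + (s⁻¹ - a) • 1 := by module
  rw [h1, Ring.inverse_smul (neg_ne_zero.mpr hs) hx, h2, mul_smul_comm, add_mul,
    Ring.mul_inverse_cancel _ hx, smul_mul_assoc, one_mul]
  match_scalars
  · field_simp
  · field_simp; ring

theorem CStarAlgebra.ringInverse_mul_star_le_of_mul_star_le {A : Type*} [CStarAlgebra A]
    [PartialOrder A] [StarOrderedRing A] {x : A} (hx : IsUnit x) (h : x * star x ≤ star x * x) :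
    x⁻¹ʳ * star x⁻¹ʳ ≤ star x⁻¹ʳ * x⁻¹ʳ := by
  obtain ⟨u, rfl⟩ := hx
  have := CStarAlgebra.inv_le_inv (a := u * star u) (b := star u * u)
    (by rw [Units.val_mul, Units.coe_star]; exact mul_star_self_nonneg _) (by simpa using h)
  rw [Ring.inverse_unit, ← Units.coe_star_inv]
  exact this

theorem LinearMap.rank_mul_mul_of_isUnit {K V : Type*} [Ring K] [StrongRankCondition K]
    [AddCommGroup V] [Module K V] {u v : Module.End K V} (hu : IsUnit u) (hv : IsUnit v)
    (f : Module.End K V) : (u * f * v).rank = f.rank := by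
  have hle : ∀ g h k : Module.End K V, (g * h * k).rank ≤ h.rank := fun g h k =>
    (rank_comp_le_left _ _).trans (rank_comp_le_right _ _)
  obtain ⟨u, rfl⟩ := hu
  obtain ⟨v, rfl⟩ := hv
  refine le_antisymm (hle _ _ _) ?_
  simpa [mul_assoc] using hle ↑u⁻¹ (u * f * v) ↑v⁻¹

theorem ContinuousLinearMap.rank_smul_mul_mul_of_isUnit {𝕜 E : Type*}
    [NontriviallyNormedField 𝕜] [NormedAddCommGroup E] [NormedSpace 𝕜 E] {c : 𝕜} (hc : c ≠ 0)
    {u v : E →L[𝕜] E} (hu : IsUnit u) (hv : IsUnit v) (f : E →L[𝕜] E) :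
    ((c • (u * f * v) : E →L[𝕜] E) : E →ₗ[𝕜] E).rank = (f : E →ₗ[𝕜] E).rank := by
  have hcu : IsUnit (c • u) := by simpa [Units.smul_def] using hu.smul (Units.mk0 c hc)
  rw [← smul_mul_assoc, ← smul_mul_assoc]
  exact LinearMap.rank_mul_mul_of_isUnit (hcu.map toLinearMapRingHom) (hv.map toLinearMapRingHom) f

section Hyponormal

variable {H : Type*} [NormedAddCommGroup H] [InnerProductSpace ℂ H] [CompleteSpace H]
  {T : H →L[ℂ] H}

theorem hyponormal_iff_mul_star_le : Hyponormal T ↔ T * star T ≤ star T * T := by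
  rw [ContinuousLinearMap.le_def, star_eq_adjoint]
  rfl

theorem hyponormal_sub_smul_one_iff (μ : ℂ) : Hyponormal (T - μ • 1) ↔ Hyponormal T := by
  simp only [Hyponormal, ← star_eq_adjoint, star_mul_sub_mul_star_sub_smul_one]

theorem Hyponormal.smul_one_add_smul (hT : Hyponormal T) (p q : ℂ) :
    Hyponormal (p • 1 + q • T) := by
  simp only [Hyponormal, ← star_eq_adjoint, star_mul_sub_mul_star_smul_one_add_smul] at hT ⊢
  exact hT.smul_of_nonneg (star_mul_self_nonneg q)

theorem Hyponormal.ringInverse (hT : Hyponormal T) (hu : IsUnit T) : Hyponormal T⁻¹ʳ := by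
  rw [hyponormal_iff_mul_star_le] at hT ⊢
  exact CStarAlgebra.ringInverse_mul_star_le_of_mul_star_le hu hT

end Hyponormal

theorem mobius_self_commutator {H : Type*} [NormedAddCommGroup H] [InnerProductSpace ℂ H]
    [CompleteSpace H] (T : H →L[ℂ] H) (hspec : spectrum ℂ T ⊆ Metric.closedBall (0 : ℂ) 1)
    (a : ℂ) (ha0 : a ≠ 0) (ha1 : ‖a‖ < 1) (β : ℂ) (hβ : ‖β‖ = 1) :
    -- `W = φ(T) = β (T - a)(1 - āT)⁻¹` and `c = (a - ā⁻¹)/ā`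
    (∀ W : H →L[ℂ] H, ∀ c : ℂ,
      W = β • ((T - a • 1) * Ring.inverse (1 - (starRingEnd ℂ a) • T)) →
      c = (a - (starRingEnd ℂ a)⁻¹) / starRingEnd ℂ a →
      adjoint W * W - W * adjoint W
        = ((‖c‖ ^ 2 : ℝ) : ℂ) •
            (Ring.inverse ((T - ((starRingEnd ℂ a)⁻¹) • 1) * (adjoint T - (a⁻¹) • 1))
              * (adjoint T * T - T * adjoint T)
              * Ring.inverse ((adjoint T - (a⁻¹) • 1) * (T - ((starRingEnd ℂ a)⁻¹) • 1))))
      ∧ (Hyponormal T →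
          Hyponormal (β • ((T - a • 1) * Ring.inverse (1 - (starRingEnd ℂ a) • T))))
      ∧ (LinearMap.rank ((adjoint T * T - T * adjoint T : H →L[ℂ] H) : H →ₗ[ℂ] H) = 1 →
          LinearMap.rank
            (((fun W => adjoint W * W - W * adjoint W)
              (β • ((T - a • 1) * Ring.inverse (1 - (starRingEnd ℂ a) • T))) :
                H →L[ℂ] H) : H →ₗ[ℂ] H) = 1) := by
  set s := starRingEnd ℂ a with hs
  have hs0 : s ≠ 0 := by simpa [hs] using ha0
  have hsinv : 1 < ‖s⁻¹‖ := by
    rw [norm_inv, hs, RCLike.norm_conj]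
    exact (one_lt_inv₀ (norm_pos_iff.mpr ha0)).mpr ha1
  set A := T - s⁻¹ • 1
  have hAu : IsUnit A := isUnit_sub_smul_one_of_spectrum_subset hspec hsinv
  have hstarA : star A = adjoint T - a⁻¹ • 1 := by simp [A, hs, star_eq_adjoint]
  set c := (a - s⁻¹) / s
  have hc0 : c ≠ 0 := by
    refine div_ne_zero (sub_ne_zero.mpr fun h => ?_) hs0
    linarith [congrArg norm h]
  set W := β • ((T - a • 1) * (1 - s • T)⁻¹ʳ)
  have hφ : W = (-β / s) • 1 + (β * c) • A⁻¹ʳ :=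
    smul_sub_smul_one_mul_ringInverse_one_sub_smul hs0 hAu a β
  have hcomm : adjoint W * W - W * adjoint W
      = ((‖c‖ ^ 2 : ℝ) : ℂ) • ((A * star A)⁻¹ʳ * (adjoint T * T - T * adjoint T)
          * (star A * A)⁻¹ʳ) := by
    rw [hφ]
    simp only [← star_eq_adjoint]
    rw [star_mul_sub_mul_star_smul_one_add_smul, star_mul_sub_mul_star_ringInverse hAu,
      star_mul_sub_mul_star_sub_smul_one]
    congr 1
    rw [RCLike.star_def, RCLike.conj_mul, norm_mul, hβ, one_mul]
    push_cast
    rfl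
  rw [hstarA] at hcomm
  refine ⟨?_, fun hT => ?_, fun hrank => ?_⟩
  · rintro _ _ rfl rfl
    exact hcomm
  · rw [hφ]
    exact (((hyponormal_sub_smul_one_iff _).mpr hT).ringInverse hAu).smul_one_add_smul _ _
  · beta_reduce
    rw [hcomm, ContinuousLinearMap.rank_smul_mul_mul_of_isUnit, hrank]
    · exact_mod_cast (pow_pos (norm_pos_iff.mpr hc0) 2).ne'
    · exact (hAu.mul (hstarA ▸ hAu.star)).ringInverse
    · exact ((hstarA ▸ hAu.star).mul hAu).ringInverse
end
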